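/- arXiv:1802.06157 — 5 statements merged into one kernel-verified Lean document; each statement's English description precedes it below -/
import Mathlib

section
/- Let K be a field of characteristic 2, let a, b ∈ K be nonzero elements with a ≠ b, and set c = a/(a² + b²) and d = b/(a² + b²). Let N be an even positive integer and let P be an orthogonal binary N×N matrix, i.e. P Pᵀ = I over F₂. Then P_{a,b} · (P_{c,d})ᵀ = I over K; in particular (P_{c,d})ᵀ = (P_{a,b})⁻¹. -/
/-!
Write `J` for the all-ones matrix and `Q` for the image of `P` in `K`, so that
`P_{a,b} = a J + (a + b) Q`. Orthogonality gives `Q Qᵀ = 1` and, since `x² = x` in `F₂`, every row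
sum of `P` is `1`, whence `Q Jᵀ = J Qᵀ = J`; moreover `J Jᵀ = N J = 0` because `N` is even. Hence
`P_{a,b} (P_{c,d})ᵀ = (a (c + d) + (a + b) c) J + (a + b)(c + d) I`, where the first coefficient
vanishes because `a d = b c` and the second is `(a + b)² / (a² + b²) = 1`.
-/

/-- For a binary matrix `P` and elements `a b` of `K`, `binSub a b P` is the matrix `P_{a,b}`
whose `(i,j)` entry is `a` if `P i j = 0` and `b` if `P i j = 1`. -/
def binSub {K : Type*} [Field K] {R N : ℕ} (a b : K)
    (P : Matrix (Fin R) (Fin N) (ZMod 2)) : Matrix (Fin R) (Fin N) K :=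
  Matrix.of fun i j => if P i j = 0 then a else b

open Matrix

section AllOnes

variable {R : Type*} [CommSemiring R] {l m n : Type*} [Fintype n]

lemma of_one_mul_transpose_of_one :
    (of 1 : Matrix m n R) * (of 1 : Matrix l n R)ᵀ = (Fintype.card n : R) • of 1 := by
  ext i j
  simp [mul_apply]

lemma mul_transpose_of_one_of_sum_eq_one {Q : Matrix m n R} (hQ : ∀ i, ∑ k, Q i k = 1) :
    Q * (of 1 : Matrix l n R)ᵀ = of 1 := by
  ext i j
  simp [mul_apply, hQ]

lemma of_one_mul_transpose_of_sum_eq_one {Q : Matrix m n R} (hQ : ∀ i, ∑ k, Q i k = 1) :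
    (of 1 : Matrix l n R) * Qᵀ = of 1 := by
  rw [← transpose_transpose (of 1 : Matrix l n R), ← transpose_mul,
    mul_transpose_of_one_of_sum_eq_one hQ]
  rfl

end AllOnes

lemma sum_row_eq_one_of_mul_transpose_eq_one {n : Type*} [Fintype n] [DecidableEq n]
    {P : Matrix n n (ZMod 2)} (hP : P * Pᵀ = 1) (i : n) : ∑ k, P i k = 1 := by
  have hsq : ∀ x : ZMod 2, x * x = x := by decide
  simpa [mul_apply, hsq] using congrFun (congrFun hP i) i

section BinarySubstitution

variable {K : Type*} [Field K] [CharP K 2]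

local notation "φ" => ZMod.castHom (dvd_refl 2) K

lemma binSub_eq_smul_of_one_add_smul_map {R N : ℕ} (a b : K)
    (P : Matrix (Fin R) (Fin N) (ZMod 2)) :
    binSub a b P = a • of 1 + (a + b) • P.map φ := by
  ext i j
  simp only [binSub, of_apply, Matrix.add_apply, Matrix.smul_apply, map_apply]
  rcases (by decide : ∀ x : ZMod 2, x = 0 ∨ x = 1) (P i j) with h | h <;>
    simp [h, CharTwo.add_cancel_left]

lemma binSub_mul_transpose_binSub {N : ℕ} (a b c d : K) {P : Matrix (Fin N) (Fin N) (ZMod 2)}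
    (hP : P * Pᵀ = 1) :
    binSub a b P * (binSub c d P)ᵀ =
      (N * a * c + a * (c + d) + (a + b) * c) • of 1 + ((a + b) * (c + d)) • 1 := by
  rw [binSub_eq_smul_of_one_add_smul_map, binSub_eq_smul_of_one_add_smul_map]
  set Q := P.map φ
  have hQ : Q * Qᵀ = 1 := by
    rw [← transpose_map, ← Matrix.map_mul, hP, Matrix.map_one _ (map_zero φ) (map_one φ)]
  have hrow (i : Fin N) : ∑ k, Q i k = 1 := by
    simp only [Q, map_apply, ← map_sum, sum_row_eq_one_of_mul_transpose_eq_one hP, map_one]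
  simp only [transpose_add, transpose_smul, add_mul, mul_add, Matrix.smul_mul, Matrix.mul_smul,
    of_one_mul_transpose_of_one, mul_transpose_of_one_of_sum_eq_one hrow,
    of_one_mul_transpose_of_sum_eq_one hrow, hQ, Fintype.card_fin]
  module

end BinarySubstitution

theorem stmt0_general (K : Type*) [Field K] [CharP K 2] (a b : K)
    (hab : a ≠ b)
    (c d : K) (hc : c = a / (a ^ 2 + b ^ 2)) (hd : d = b / (a ^ 2 + b ^ 2))
    (N : ℕ) (hNeven : Even N)
    (P : Matrix (Fin N) (Fin N) (ZMod 2)) (hP : P * P.transpose = 1) :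
    binSub a b P * (binSub c d P).transpose = 1 ∧
      (binSub c d P).transpose = (binSub a b P)⁻¹ := by
  have hsum : a + b ≠ 0 := mt CharTwo.add_eq_zero.mp hab
  have hN : (N : K) = 0 := by simp [CharTwo.natCast_eq_ite, hNeven]
  have hoff : a * (c + d) + (a + b) * c = 0 := by
    rw [CharTwo.add_eq_zero, hc, hd]
    ring
  have hdiag : (a + b) * (c + d) = 1 := by
    rw [hc, hd, ← add_div, ← CharTwo.add_sq]
    field_simp
  have key : binSub a b P * (binSub c d P)ᵀ = 1 := by
    rw [binSub_mul_transpose_binSub a b c d hP, hN, hdiag, zero_mul, zero_mul, zero_add, hoff,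
      zero_smul, one_smul, zero_add]
  exact ⟨key, (inv_eq_right_inv key).symm⟩

theorem stmt0 (K : Type*) [Field K] [CharP K 2] (a b : K)
    (ha : a ≠ 0) (hb : b ≠ 0) (hab : a ≠ b)
    (c d : K) (hc : c = a / (a ^ 2 + b ^ 2)) (hd : d = b / (a ^ 2 + b ^ 2))
    (N : ℕ) (hN : 0 < N) (hNeven : Even N)
    (P : Matrix (Fin N) (Fin N) (ZMod 2)) (hP : P * P.transpose = 1) :
    binSub a b P * (binSub c d P).transpose = 1 ∧
      (binSub c d P).transpose = (binSub a b P)⁻¹ :=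
  stmt0_general K a b hab c d hc hd N hNeven P hP
end

section
/- Let K be a field of characteristic 2, let a, b ∈ K be nonzero elements with a ≠ b, and set c = a/(a² + b²) and d = b/(a² + b²). Let N be an even positive integer, let P be an orthogonal binary N×N matrix, let H be a binary R×N matrix (viewed over K), and let G ∈ K^{k×N} satisfy G Hᵀ = 0. Define G_pub = G (P_{c,d})ᵀ and H̃ = H (P_{a,b})ᵀ (products over K). Then G_pub H̃ᵀ = 0, i.e. the code generated by G_pub is contained in the code with parity-check matrix H̃. -/
namespace BinSub

open Matrix

def ones (K : Type*) [One K] (m n : Type*) : Matrix m n K := Matrix.of fun _ _ => 1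

theorem sum_col_eq_one_of_transpose_mul_self_eq_one {ι : Type*} [Fintype ι] [DecidableEq ι]
    {P : Matrix ι ι (ZMod 2)} (hP : Pᵀ * P = 1) (j : ι) :
    ∑ l, P l j = 1 := by
  have hdiag := congrFun (congrFun hP j) j
  simp only [mul_apply, transpose_apply, one_apply_eq] at hdiag
  have hidem : ∀ x : ZMod 2, x * x = x := by decide
  simpa only [hidem] using hdiag

variable {K : Type*} [Field K] [CharP K 2]

local notation "castF₂" => ZMod.castHom (dvd_refl 2) K

theorem ite_eq_add_mul_cast (u v : K) (x : ZMod 2) :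
    (if x = 0 then u else v) = u + (v - u) * castF₂ x := by
  have hx : x = 0 ∨ x = 1 := by revert x; decide
  rcases hx with rfl | rfl <;> simp

theorem binSub_eq {R N : ℕ} (u v : K) (P : Matrix (Fin R) (Fin N) (ZMod 2)) :
    binSub u v P = u • ones K _ _ + (v - u) • P.map castF₂ := by
  ext i j
  simp [binSub, ones, ite_eq_add_mul_cast]

theorem ones_mul_ones_of_even_card {m n ι : Type*} [Fintype ι] (hι : Even (Fintype.card ι)) :
    ones K m ι * ones K ι n = 0 := by
  ext i j
  simp [ones, mul_apply, natCast_eq_zero_of_even_of_two_eq_zero hι CharTwo.two_eq_zero]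

section Orthogonal

variable {ι : Type*} [Fintype ι] [DecidableEq ι] {P : Matrix ι ι (ZMod 2)}

theorem ones_mul_map_of_orthogonal {m : Type*} (hP : Pᵀ * P = 1) :
    ones K m ι * P.map castF₂ = ones K m ι := by
  ext i j
  simp only [ones, mul_apply, of_apply, map_apply, one_mul]
  rw [← map_sum, sum_col_eq_one_of_transpose_mul_self_eq_one hP j, map_one]

theorem map_transpose_mul_ones_of_orthogonal {n : Type*} (hP : Pᵀ * P = 1) :
    (P.map castF₂)ᵀ * ones K ι n = ones K ι n := by
  ext i j
  simp only [ones, mul_apply, of_apply, transpose_apply, map_apply, mul_one]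
  rw [← map_sum, sum_col_eq_one_of_transpose_mul_self_eq_one hP i, map_one]

theorem map_transpose_mul_map_of_orthogonal (hP : Pᵀ * P = 1) :
    (P.map castF₂)ᵀ * P.map castF₂ = 1 := by
  rw [← transpose_map, ← Matrix.map_mul, hP, Matrix.map_one _ (map_zero _) (map_one _)]

end Orthogonal

theorem binSub_transpose_mul_binSub {N : ℕ} {P : Matrix (Fin N) (Fin N) (ZMod 2)}
    (hN : Even N) (hP : Pᵀ * P = 1) {u v a b : K}
    (h_ones_coeff : u * (b - a) + a * (v - u) = 0) (h_one_coeff : (v - u) * (b - a) = 1) :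
    (binSub u v P)ᵀ * binSub a b P = 1 := by
  rw [binSub_eq, binSub_eq, transpose_add, transpose_smul, transpose_smul]
  have hJ : (ones K (Fin N) (Fin N))ᵀ = ones K (Fin N) (Fin N) := rfl
  have hJJ := ones_mul_ones_of_even_card (K := K) (m := Fin N) (n := Fin N)
    (by rwa [Fintype.card_fin])
  simp only [hJ, add_mul, mul_add, smul_mul_smul_comm, hJJ, ones_mul_map_of_orthogonal hP,
    map_transpose_mul_ones_of_orthogonal hP, map_transpose_mul_map_of_orthogonal hP, smul_zero,
    zero_add, smul_one_eq_diagonal]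
  rw [← add_assoc, ← add_smul, add_comm ((v - u) * a), mul_comm (v - u) a, h_ones_coeff,
    zero_smul, zero_add, h_one_coeff, diagonal_one]

end BinSub

open BinSub in
theorem stmt1_general (K : Type*) [Field K] [CharP K 2] (a b : K)
    (hab : a ≠ b)
    (c d : K) (hc : c = a / (a ^ 2 + b ^ 2)) (hd : d = b / (a ^ 2 + b ^ 2))
    (N R k : ℕ) (hNeven : Even N)
    (P : Matrix (Fin N) (Fin N) (ZMod 2)) (hP : P * P.transpose = 1)
    (H : Matrix (Fin R) (Fin N) (ZMod 2))
    (G : Matrix (Fin k) (Fin N) K)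
    (hGH : G * (H.map (ZMod.castHom (dvd_refl 2) K)).transpose = 0)
    (Gpub : Matrix (Fin k) (Fin N) K) (hGpub : Gpub = G * (binSub c d P).transpose)
    (Htilde : Matrix (Fin R) (Fin N) K)
    (hHtilde : Htilde = H.map (ZMod.castHom (dvd_refl 2) K) * (binSub a b P).transpose) :
    Gpub * Htilde.transpose = 0 := by
  have hba : b - a ≠ 0 := sub_ne_zero.mpr hab.symm
  have hsq : a ^ 2 + b ^ 2 = (b - a) ^ 2 := by rw [CharTwo.sub_eq_add, CharTwo.add_sq, add_comm]
  have hdc : d - c = (b - a)⁻¹ := by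
    rw [hc, hd, hsq, ← sub_div]
    field_simp
  have hcba : c * (b - a) = a * (b - a)⁻¹ := by
    rw [hc, hsq]
    field_simp
  have h_ones_coeff : c * (b - a) + a * (d - c) = 0 := by
    rw [hcba, hdc, CharTwo.add_self_eq_zero]
  have h_one_coeff : (d - c) * (b - a) = 1 := by rw [hdc, inv_mul_cancel₀ hba]
  have hinv :=
    binSub_transpose_mul_binSub hNeven (mul_eq_one_comm.mp hP) h_ones_coeff h_one_coeff
  rw [hGpub, hHtilde, Matrix.transpose_mul, Matrix.transpose_transpose, Matrix.mul_assoc,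
    ← Matrix.mul_assoc (binSub c d P).transpose, hinv, Matrix.one_mul, hGH]

theorem stmt1 (K : Type*) [Field K] [CharP K 2] (a b : K)
    (ha : a ≠ 0) (hb : b ≠ 0) (hab : a ≠ b)
    (c d : K) (hc : c = a / (a ^ 2 + b ^ 2)) (hd : d = b / (a ^ 2 + b ^ 2))
    (N R k : ℕ) (hN : 0 < N) (hNeven : Even N)
    (P : Matrix (Fin N) (Fin N) (ZMod 2)) (hP : P * P.transpose = 1)
    (H : Matrix (Fin R) (Fin N) (ZMod 2))
    (G : Matrix (Fin k) (Fin N) K)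
    (hGH : G * (H.map (ZMod.castHom (dvd_refl 2) K)).transpose = 0)
    (Gpub : Matrix (Fin k) (Fin N) K) (hGpub : Gpub = G * (binSub c d P).transpose)
    (Htilde : Matrix (Fin R) (Fin N) K)
    (hHtilde : Htilde = H.map (ZMod.castHom (dvd_refl 2) K) * (binSub a b P).transpose) :
    Gpub * Htilde.transpose = 0 :=
  stmt1_general K a b hab c d hc hd N R k hNeven P hP H G hGH Gpub hGpub Htilde hHtilde
end

section
/- Let K be a field of characteristic 2, let a, b ∈ K, let H be a binary R×N matrix (viewed over K) and let P be a binary N×N matrix. Then every entry of the matrix H̃ = H (P_{a,b})ᵀ (product over K) lies in the F₂-subspace of K spanned by a and b. In particular, H̃ is a parity-check matrix of low rank: the F₂-space generated by its coefficients has dimension at most 2. -/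
attribute [local instance] ZMod.algebra

/-! Entries of `H̃ = H · P_{a,b}ᵀ` are `F₂`-combinations of entries of `P_{a,b}`, each of which
is `a` or `b`; so they lie in `span {a, b}`, a space of dimension at most `2`. -/

theorem Matrix.map_algebraMap_mul_apply_mem {F K m n o : Type*} [CommSemiring F] [Semiring K]
    [Algebra F K] [Fintype n] (A : Matrix m n F) (B : Matrix n o K) {S : Submodule F K}
    (hB : ∀ k j, B k j ∈ S) (i : m) (j : o) : (A.map (algebraMap F K) * B) i j ∈ S := by
  rw [Matrix.mul_apply]
  refine Submodule.sum_mem _ fun k _ => ?_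
  rw [Matrix.map_apply, ← Algebra.smul_def]
  exact S.smul_mem _ (hB k j)

theorem binSub_apply_mem_pair {K : Type*} [Field K] {R N : ℕ} (a b : K)
    (P : Matrix (Fin R) (Fin N) (ZMod 2)) (i : Fin R) (j : Fin N) :
    binSub a b P i j ∈ ({a, b} : Set K) := by
  rw [binSub, Matrix.of_apply]
  split_ifs
  · exact Set.mem_insert a {b}
  · exact Set.mem_insert_of_mem a rfl

theorem Submodule.finrank_le_two_of_le_span_pair {F M : Type*} [DivisionRing F]
    [AddCommGroup M] [Module F M] {S : Submodule F M} {a b : M}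
    (hS : S ≤ Submodule.span F {a, b}) : Module.finrank F S ≤ 2 := by
  have : Module.Finite F (Submodule.span F ({a, b} : Set M)) :=
    FiniteDimensional.span_of_finite F (Set.toFinite _)
  classical
  calc Module.finrank F S ≤ Module.finrank F (Submodule.span F ({a, b} : Set M)) :=
        Submodule.finrank_mono hS
    _ ≤ ({a, b} : Finset M).card := by
        have := finrank_span_finset_le_card (R := F) ({a, b} : Finset M)
        rwa [Set.finrank, Finset.coe_insert, Finset.coe_singleton] at this
    _ ≤ 2 := Finset.card_le_two

theorem stmt2 (K : Type*) [Field K] [CharP K 2] (a b : K)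
    (R N : ℕ)
    (H : Matrix (Fin R) (Fin N) (ZMod 2))
    (P : Matrix (Fin N) (Fin N) (ZMod 2))
    (Htilde : Matrix (Fin R) (Fin N) K)
    (hHtilde : Htilde = H.map (ZMod.castHom (dvd_refl 2) K) * (binSub a b P).transpose) :
    (∀ i j, Htilde i j ∈ Submodule.span (ZMod 2) ({a, b} : Set K)) ∧
      Module.finrank (ZMod 2)
        (Submodule.span (ZMod 2) (Set.range fun p : Fin R × Fin N => Htilde p.1 p.2)) ≤ 2 := by
  have hmem : ∀ i j, Htilde i j ∈ Submodule.span (ZMod 2) ({a, b} : Set K) := fun i j => by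
    subst hHtilde
    -- `ZMod.castHom` is definitionally the `algebraMap` of `ZMod.algebra`
    exact H.map_algebraMap_mul_apply_mem _
      (fun k j => Submodule.subset_span (binSub_apply_mem_pair a b P j k)) i j
  exact ⟨hmem, Submodule.finrank_le_two_of_le_span_pair
    (Submodule.span_le.2 (Set.range_subset_iff.2 fun p => hmem p.1 p.2))⟩
end

section
/- Let K be a field of characteristic 2 and α ∈ K. Let H'' be an R×N matrix over K all of whose entries lie in {1, α}, let Q be an invertible R×R binary matrix, and set H⁽³⁾ = Q H'' (product over K, viewing Q over K). Then for every vector e = (e₁, …, e_N) ∈ K^N, Supp(H⁽³⁾ eᵀ) ⊆ (1+α)·Supp(e) + span_{F₂}{e₁ + ⋯ + e_N}, where (1+α)·Supp(e) denotes the image of Supp(e) under multiplication by 1+α. -/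
attribute [local instance] ZMod.algebra

/-- The support of a vector `x ∈ K^n`: the `F₂`-subspace of `K` spanned by its coordinates. -/
def Supp {K : Type*} [Field K] [CharP K 2] {n : ℕ} (x : Fin n → K) :
    Submodule (ZMod 2) K :=
  Submodule.span (ZMod 2) (Set.range x)

/-! Over `F₂` an entry `c ∈ {1, α}` contributes `c eⱼ = (1 + c) eⱼ + eⱼ` with `1 + c ∈ {0, 1 + α}`,
so a row of `H''` sends `e` into `(1 + α)·Supp(e) + F₂·∑ⱼ eⱼ`. Multiplying by a binary matrix only
takes `F₂`-combinations of the coordinates, which cannot leave an `F₂`-subspace. -/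

section Supp

variable {K : Type*} [Field K] [CharP K 2]

theorem Supp_le_iff {n : ℕ} (x : Fin n → K) (S : Submodule (ZMod 2) K) :
    Supp x ≤ S ↔ ∀ i, x i ∈ S := by
  rw [Supp, Submodule.span_le, Set.range_subset_iff]
  rfl

theorem mem_Supp {n : ℕ} (x : Fin n → K) (i : Fin n) : x i ∈ Supp x :=
  Submodule.subset_span ⟨i, rfl⟩

theorem Supp_mulVec_map_castHom_le {m n : ℕ} (Q : Matrix (Fin m) (Fin n) (ZMod 2))
    (v : Fin n → K) : Supp ((Q.map (ZMod.castHom (dvd_refl 2) K)).mulVec v) ≤ Supp v := by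
  refine (Supp_le_iff _ _).2 fun i => ?_
  rw [Matrix.mulVec, dotProduct]
  refine Submodule.sum_mem _ fun k _ => ?_
  have hsmul : ZMod.castHom (dvd_refl 2) K (Q i k) * v k = Q i k • v k := by
    rw [Algebra.smul_def]
    rfl
  simpa only [Matrix.map_apply, hsmul] using Submodule.smul_mem _ (Q i k) (mem_Supp v k)

theorem dotProduct_mem_of_forall_eq_one_or_eq {n : ℕ} {α : K} {c : Fin n → K}
    (hc : ∀ j, c j = 1 ∨ c j = α) (e : Fin n → K) :
    c ⬝ᵥ e ∈ (Supp e).map (LinearMap.mulLeft (ZMod 2) (1 + α)) ⊔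
      Submodule.span (ZMod 2) ({∑ j, e j} : Set K) := by
  have hsplit : c ⬝ᵥ e = ∑ j, (1 + c j) * e j + ∑ j, e j := by
    simp only [dotProduct, add_mul, one_mul, Finset.sum_add_distrib]
    rw [add_comm (∑ j, e j), add_assoc, CharTwo.add_self_eq_zero, add_zero]
  rw [hsplit]
  refine add_mem (Submodule.mem_sup_left (Submodule.sum_mem _ fun j _ => ?_))
    (Submodule.mem_sup_right (Submodule.mem_span_singleton_self _))
  rcases hc j with h | h
  · rw [h, CharTwo.add_self_eq_zero, zero_mul]
    exact zero_mem _
  · rw [h]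
    exact Submodule.mem_map_of_mem (mem_Supp e j)

end Supp

theorem stmt3_general (K : Type*) [Field K] [CharP K 2] (α : K)
    (R N : ℕ)
    (H'' : Matrix (Fin R) (Fin N) K)
    (hH'' : ∀ i j, H'' i j = 1 ∨ H'' i j = α)
    (Q : Matrix (Fin R) (Fin R) (ZMod 2))
    (H3 : Matrix (Fin R) (Fin N) K)
    (hH3 : H3 = Q.map (ZMod.castHom (dvd_refl 2) K) * H'')
    (e : Fin N → K) :
    Supp (H3.mulVec e) ≤
      (Supp e).map (LinearMap.mulLeft (ZMod 2) (1 + α)) ⊔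
        Submodule.span (ZMod 2) ({∑ j, e j} : Set K) := by
  rw [hH3, ← Matrix.mulVec_mulVec]
  exact (Supp_mulVec_map_castHom_le Q (H''.mulVec e)).trans
    ((Supp_le_iff _ _).2 fun i => dotProduct_mem_of_forall_eq_one_or_eq (hH'' i) e)

theorem stmt3 (K : Type*) [Field K] [CharP K 2] (α : K)
    (R N : ℕ)
    (H'' : Matrix (Fin R) (Fin N) K)
    (hH'' : ∀ i j, H'' i j = 1 ∨ H'' i j = α)
    (Q : Matrix (Fin R) (Fin R) (ZMod 2)) (hQ : IsUnit Q)
    (H3 : Matrix (Fin R) (Fin N) K)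
    (hH3 : H3 = Q.map (ZMod.castHom (dvd_refl 2) K) * H'')
    (e : Fin N → K) :
    Supp (H3.mulVec e) ≤
      (Supp e).map (LinearMap.mulLeft (ZMod 2) (1 + α)) ⊔
        Submodule.span (ZMod 2) ({∑ j, e j} : Set K) :=
  stmt3_general K α R N H'' hH'' Q H3 hH3 e
end

section
/- Let K be a field of characteristic 2, let a, b ∈ K with a ≠ b, and let R ≥ 2. Let M be an R×N matrix over K all of whose entries lie in {a, b} and whose rows are linearly independent over K, and let G ∈ K^{k×N} satisfy G Mᵀ = 0. Then there exists an (R−1)×N matrix H⁽⁴⁾ over K all of whose entries lie in {0, 1}, whose rows are linearly independent over K (i.e. H⁽⁴⁾ has full rank R−1), and which satisfies G (H⁽⁴⁾)ᵀ = 0. -/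
/-!
Subtract the first row of `M` from the others and divide by `a - b`. The new entries lie in
`{0, 1, -1} = {0, 1}` (characteristic 2); the new rows are still independent (they are the
difference vectors of an affinely independent family) and lie in the span of the rows of `M`,
hence in the kernel of `G`.
-/

open Matrix

theorem Matrix.mul_transpose_eq_zero_iff {m n o α : Type*} [Fintype n]
    [NonUnitalNonAssocSemiring α] (G : Matrix m n α) (H : Matrix o n α) :
    G * Hᵀ = 0 ↔ ∀ i, G *ᵥ H i = 0 := by
  simp only [← Matrix.ext_iff, funext_iff, mul_apply, transpose_apply, zero_apply, mulVec,
    dotProduct, Pi.zero_apply]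
  exact forall_comm

theorem LinearIndependent.succ_sub_zero {k V : Type*} [Ring k] [AddCommGroup V] [Module k V]
    {n : ℕ} {v : Fin (n + 1) → V} (hv : LinearIndependent k v) :
    LinearIndependent k fun i : Fin n => v i.succ - v 0 :=
  ((affineIndependent_iff_linearIndependent_vsub k v 0).mp hv.affineIndependent).comp
    (fun i => ⟨i.succ, i.succ_ne_zero⟩)
    fun _ _ h => Fin.succ_injective _ (congrArg Subtype.val h)

theorem CharTwo.inv_sub_mul_sub_eq_zero_or_one {K : Type*} [Field K] [CharP K 2] {a b x y : K}
    (hab : a ≠ b) (hx : x = a ∨ x = b) (hy : y = a ∨ y = b) :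
    (a - b)⁻¹ * (x - y) = 0 ∨ (a - b)⁻¹ * (x - y) = 1 := by
  rcases hx with rfl | rfl <;> rcases hy with rfl | rfl
  · simp
  · exact .inr (inv_mul_cancel₀ (sub_ne_zero.mpr hab))
  · rw [← neg_sub, inv_neg, CharTwo.neg_eq]
    exact .inr (inv_mul_cancel₀ (sub_ne_zero.mpr hab.symm))
  · simp

theorem stmt9 (K : Type*) [Field K] [CharP K 2] (a b : K) (hab : a ≠ b)
    (R N k : ℕ) (hR : 2 ≤ R)
    (M : Matrix (Fin R) (Fin N) K)
    (hM : ∀ i j, M i j = a ∨ M i j = b)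
    (hMrows : LinearIndependent K (fun i : Fin R => M i))
    (G : Matrix (Fin k) (Fin N) K)
    (hG : G * M.transpose = 0) :
    ∃ H4 : Matrix (Fin (R - 1)) (Fin N) K,
      (∀ i j, H4 i j = 0 ∨ H4 i j = 1) ∧
      LinearIndependent K (fun i : Fin (R - 1) => H4 i) ∧
      G * H4.transpose = 0 := by
  obtain ⟨R, rfl⟩ : ∃ R', R = R' + 1 := ⟨R - 1, by omega⟩
  refine ⟨fun i => (a - b)⁻¹ • (M i.succ - M 0),
    fun i j => CharTwo.inv_sub_mul_sub_eq_zero_or_one hab (hM _ _) (hM _ _), ?_, ?_⟩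
  · exact hMrows.succ_sub_zero.units_smul fun _ => Units.mk0 _ (inv_ne_zero (sub_ne_zero.mpr hab))
  · rw [mul_transpose_eq_zero_iff] at hG
    refine (mul_transpose_eq_zero_iff _ _).mpr fun i => ?_
    rw [mulVec_smul, mulVec_sub, hG, hG, sub_zero, smul_zero]
end
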